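/- Assume π̲ = 0 and let t_k, t_r > 0. For every fixed p ∈ [0, π̄] with F(p) > 0 and 2 t_r (1 − F(p)) ≤ t_k, the persistent-request cost Φ₃(p, q) is nondecreasing in q on [0, 1]: if 0 ≤ q ≤ q' ≤ 1 then Φ₃(p, q) ≤ Φ₃(p, q'). -/

import Mathlib

/-!
`Φ₃(p, ·)` is affine in `q` with slope `t_e (π̄ - A / D)`, where `A` is the mean spot price below `p`
and `D = 1 - (t_r / t_k)(1 - F p)`. A nonincreasing density puts its mean on `[0, p]` left of the
midpoint, so `A ≤ p / 2`, and the recovery condition gives `D ≥ 1 / 2`; hence `A / D ≤ p ≤ π̄`.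
-/

/-- Expected total cost for a persistent request (with `π̲ = 0`). -/
noncomputable def Phi3 (πhi tk te tr : ℝ) (f F : ℝ → ℝ) (p q : ℝ) : ℝ :=
  q * te * πhi +
    ((1 - q) * te / (1 - (tr / tk) * (1 - F p))) * ((∫ x in (0:ℝ)..p, x * f x) / F p)

open Set MeasureTheory intervalIntegral

/-- Pairing `x` with its reflection `a + b - x`, the factors `x - (a + b) / 2` and
`f x - f (a + b - x)` have opposite signs. -/
theorem AntitoneOn.two_mul_integral_id_mul_le {f : ℝ → ℝ} {a b : ℝ} (hab : a ≤ b)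
    (hf : AntitoneOn f (Icc a b)) :
    2 * ∫ x in a..b, x * f x ≤ (a + b) * ∫ x in a..b, f x := by
  have hrefl : MapsTo (fun x => a + b - x) (Icc a b) (Icc a b) := fun x hx =>
    ⟨by linarith [hx.2], by linarith [hx.1]⟩
  have hf' : MonotoneOn (fun x => f (a + b - x)) (Icc a b) := fun x hx y hy hxy =>
    hf (hrefl hy) (hrefl hx) (by simp only; linarith)
  have hint : IntervalIntegrable f volume a b :=
    AntitoneOn.intervalIntegrable (by rwa [uIcc_of_le hab])
  have hint' : IntervalIntegrable (fun x => f (a + b - x)) volume a b :=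
    MonotoneOn.intervalIntegrable (by rwa [uIcc_of_le hab])
  have hmul : IntervalIntegrable (fun x => x * f x) volume a b :=
    hint.continuousOn_mul continuousOn_id
  have hmul' : IntervalIntegrable (fun x => (a + b - x) * f (a + b - x)) volume a b :=
    hint'.continuousOn_mul (continuousOn_const.sub continuousOn_id)
  have hreflect (g : ℝ → ℝ) : ∫ x in a..b, g (a + b - x) = ∫ x in a..b, g x := by
    simp [integral_comp_sub_left]
  calc 2 * ∫ x in a..b, x * f x
      = ∫ x in a..b, (x * f x + (a + b - x) * f (a + b - x)) := by
        rw [integral_add hmul hmul', hreflect fun x => x * f x]; ring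
    _ ≤ ∫ x in a..b, (a + b) / 2 * (f x + f (a + b - x)) := by
        refine integral_mono_on hab (hmul.add hmul') ((hint.add hint').const_mul _) fun x hx => ?_
        rcases le_total x ((a + b) / 2) with hx2 | hx2
        · nlinarith [hf hx (hrefl hx) (by linarith : x ≤ a + b - x)]
        · nlinarith [hf (hrefl hx) hx (by linarith : a + b - x ≤ x)]
    _ = (a + b) * ∫ x in a..b, f x := by
        rw [intervalIntegral.integral_const_mul, integral_add hint hint', hreflect f]; ring

theorem one_half_le_one_sub_div_mul {tk tr s : ℝ} (htk : 0 < tk) (h : 2 * tr * s ≤ tk) :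
    1 / 2 ≤ 1 - tr / tk * s := by
  rw [div_mul_eq_mul_div, ← sub_nonneg]
  have : tr * s / tk ≤ 1 / 2 := by rw [div_le_iff₀ htk]; linarith
  linarith

theorem Phi3_eq (πhi tk te tr : ℝ) (f F : ℝ → ℝ) (p q : ℝ) :
    Phi3 πhi tk te tr f F p q =
      te * ((∫ x in (0:ℝ)..p, x * f x) / F p / (1 - tr / tk * (1 - F p))) +
        q * te * (πhi - (∫ x in (0:ℝ)..p, x * f x) / F p / (1 - tr / tk * (1 - F p))) := by
  unfold Phi3; ring

theorem Phi3_mono {πhi tk te tr : ℝ} {f F : ℝ → ℝ} {p : ℝ} (hte : 0 ≤ te)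
    (h : (∫ x in (0:ℝ)..p, x * f x) / F p / (1 - tr / tk * (1 - F p)) ≤ πhi) :
    Monotone (Phi3 πhi tk te tr f F p) := fun q q' hqq' => by
  rw [Phi3_eq, Phi3_eq]
  nlinarith [mul_nonneg (mul_nonneg (sub_nonneg.2 hqq') hte) (sub_nonneg.2 h)]

theorem stmt_13
    (πhi : ℝ) (f F : ℝ → ℝ)
    (hanti : ∀ x ∈ Set.Icc 0 πhi, ∀ y ∈ Set.Icc 0 πhi, x ≤ y → f y ≤ f x)
    (hF : ∀ p, F p = ∫ x in (0:ℝ)..p, f x)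
    (tk te tr : ℝ) (htk : 0 < tk) (hte : 0 < te)
    (p : ℝ) (hp : p ∈ Set.Icc 0 πhi) (hFp : 0 < F p)
    (hrec : 2 * tr * (1 - F p) ≤ tk)
    (q q' : ℝ) (hqq' : q ≤ q') :
    Phi3 πhi tk te tr f F p q ≤ Phi3 πhi tk te tr f F p q' := by
  obtain ⟨hp0, hpπ⟩ := hp
  have hmean : (∫ x in (0:ℝ)..p, x * f x) / F p ≤ p / 2 := by
    have := AntitoneOn.two_mul_integral_id_mul_le hp0 fun x hx y hy hxy =>
      hanti x (Icc_subset_Icc le_rfl hpπ hx) y (Icc_subset_Icc le_rfl hpπ hy) hxy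
    rw [div_le_iff₀ hFp, hF]
    linarith
  have hD := one_half_le_one_sub_div_mul htk hrec
  refine Phi3_mono hte.le ?_ hqq'
  rw [div_le_iff₀ (by linarith)]
  nlinarith
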